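/- arXiv:1111.2229 — 3 statements merged into one kernel-verified Lean document; each statement's English description precedes it below -/
import Mathlib

section
/- For a ∈ ℝ₊ⁿ with all coordinates strictly positive, the set Γ_a = {x ∈ ℝ₊ⁿ : ⟨x, a⟩ ≥ 1} is indecomposable in 𝒞: whenever Γ_a = K₁ + K₂ with K₁, K₂ ∈ 𝒞 nonempty, at least one of K₁, K₂ is homothetic to Γ_a, i.e., of the form c·Γ_a + x with c ≥ 0 and x ∈ ℝ₊ⁿ (where 0·Γ_a + x is interpreted as the translated orthant x + ℝ₊ⁿ). -/
/-!
Split a vertex `aᵢ⁻¹ eᵢ` of `Γ_a` as `p + q` with `p ∈ K₁`, `q ∈ K₂`. Since `⟨·, a⟩ ≥ 1` on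
`Γ_a` with equality at the vertex, `p` and `q` minimise `⟨·, a⟩` on `K₁` and `K₂`, and the two
minima add up to `1`; as `p, q ≥ 0`, `p` is a multiple of `eᵢ`. So if `c` is the minimum on `K₁`,
then `K₁` contains `c aᵢ⁻¹ eᵢ` for every `i`, and by convexity and completeness all of
`{x ≥ 0 : ⟨x, a⟩ ≥ c}`, which by minimality of `c` is exactly `K₁`. That set is `c • Γ_a` for
`c > 0` and the orthant for `c = 0`.
-/

open Pointwise

def orthant (n : ℕ) : Set (Fin n → ℝ) := {x | ∀ i, 0 ≤ x i}

def IsComplete' {n : ℕ} (Γ : Set (Fin n → ℝ)) : Prop :=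
  ∀ a ∈ Γ, ∀ x ∈ orthant n, a + x ∈ Γ

/-- membership in the class 𝒞 -/
def MemC {n : ℕ} (Γ : Set (Fin n → ℝ)) : Prop :=
  Γ ⊆ orthant n ∧ Γ.Nonempty ∧ IsClosed Γ ∧ Convex ℝ Γ ∧ IsComplete' Γ

/-- `K` is homothetic to `B`: `K = c•B + x` with `c ≥ 0`, `x` in the orthant, where
the degenerate case `c = 0` is interpreted as the translated orthant `x + ℝ₊ⁿ`. -/
def Homothetic {n : ℕ} (K B : Set (Fin n → ℝ)) : Prop :=
  (∃ c : ℝ, 0 < c ∧ ∃ x ∈ orthant n, K = c • B + {x}) ∨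
    (∃ x ∈ orthant n, K = {x} + orthant n)

lemma eq_single_of_add_eq_single {ι : Type*} [DecidableEq ι] {p q : ι → ℝ} (hp : 0 ≤ p)
    (hq : 0 ≤ q) {i : ι} {t : ℝ} (h : p + q = Pi.single i t) : p = Pi.single i (p i) := by
  funext m
  by_cases hm : m = i
  · subst hm
    simp
  · have hpq := congrFun h m
    simp only [Pi.add_apply, Pi.single_eq_of_ne hm] at hpq
    rw [Pi.single_eq_of_ne hm]
    linarith [show 0 ≤ p m from hp m, show 0 ≤ q m from hq m]

namespace Orthant

variable {n : ℕ} {a : Fin n → ℝ}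

/-- `cutOrthant a 1` is the paper's `Γ_a`. -/
def cutOrthant (a : Fin n → ℝ) (c : ℝ) : Set (Fin n → ℝ) := {x | x ∈ orthant n ∧ c ≤ x ⬝ᵥ a}

lemma cutOrthant_zero (ha : ∀ i, 0 ≤ a i) : cutOrthant a 0 = orthant n :=
  Set.ext fun _ => and_iff_left_of_imp fun hx => dotProduct_nonneg_of_nonneg hx ha

lemma smul_cutOrthant_one {c : ℝ} (hc : 0 < c) : c • cutOrthant a 1 = cutOrthant a c := by
  ext y
  rw [Set.mem_smul_set_iff_inv_smul_mem₀ hc.ne']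
  simp only [cutOrthant, orthant, Set.mem_ofPred_eq, Pi.smul_apply, smul_eq_mul,
    mul_nonneg_iff_of_pos_left (inv_pos.mpr hc), smul_dotProduct, le_inv_mul_iff₀ hc, mul_one]

lemma homothetic_cutOrthant (ha : ∀ i, 0 ≤ a i) {c : ℝ} (hc : 0 ≤ c) :
    Homothetic (cutOrthant a c) (cutOrthant a 1) := by
  rcases hc.eq_or_lt with rfl | hc
  · exact Or.inr ⟨0, fun _ => le_rfl, by
      simp only [cutOrthant_zero ha, Set.singleton_add, zero_add, Set.image_id']⟩
  · exact Or.inl ⟨c, hc, 0, fun _ => le_rfl, by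
      simp only [Set.add_singleton, add_zero, Set.image_id', smul_cutOrthant_one hc]⟩

noncomputable def vertex (a : Fin n → ℝ) (i : Fin n) : Fin n → ℝ := Pi.single i (a i)⁻¹

lemma vertex_dotProduct (ha : ∀ i, 0 < a i) (i : Fin n) : vertex a i ⬝ᵥ a = 1 := by
  rw [vertex, single_dotProduct, inv_mul_cancel₀ (ha i).ne']

lemma vertex_mem_cutOrthant (ha : ∀ i, 0 < a i) (i : Fin n) : vertex a i ∈ cutOrthant a 1 :=
  ⟨(Pi.single_nonneg.mpr (inv_nonneg.mpr (ha i).le) : 0 ≤ vertex a i), (vertex_dotProduct ha i).ge⟩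

lemma eq_smul_vertex_of_add_eq_vertex (ha : ∀ i, 0 < a i) {p q : Fin n → ℝ} (hp : p ∈ orthant n)
    (hq : q ∈ orthant n) {i : Fin n} (h : p + q = vertex a i) : p = (p ⬝ᵥ a) • vertex a i := by
  rw [eq_single_of_add_eq_single hp hq h, single_dotProduct, vertex, ← Pi.single_smul',
    smul_eq_mul, mul_inv_cancel_right₀ (ha i).ne']

lemma cutOrthant_subset (ha : ∀ i, 0 < a i) {K : Set (Fin n → ℝ)} (hconv : Convex ℝ K)
    (hcompl : IsComplete' K) [Nonempty (Fin n)] {c : ℝ} (hc : 0 ≤ c)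
    (hv : ∀ i, c • vertex a i ∈ K) : cutOrthant a c ⊆ K := by
  rintro y ⟨hy, hyc⟩
  rcases hc.eq_or_lt with rfl | hc
  · have h0 : (0 : Fin n → ℝ) ∈ K := by simpa using hv (Classical.arbitrary _)
    exact zero_add y ▸ hcompl 0 h0 y hy
  set T := y ⬝ᵥ a
  have hT : 0 < T := hc.trans_le hyc
  -- `y = ∑ (yᵢ aᵢ / T) • (c • vertex a i) + (1 - c / T) • y`, a convex combination plus a
  -- point of the orthant.
  have hcomb : ∑ i, (y i * a i / T) • (c • vertex a i) = (c / T) • y := by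
    simp_rw [vertex, ← Pi.single_smul', smul_eq_mul]
    rw [← Finset.univ_sum_single ((c / T) • y)]
    refine Finset.sum_congr rfl fun i _ => congrArg _ ?_
    simp only [Pi.smul_apply, smul_eq_mul]
    field_simp [(ha i).ne']
  have hmem : (c / T) • y ∈ K := by
    rw [← hcomb]
    refine hconv.sum_mem (fun i _ => by have := hy i; have := ha i; positivity) ?_
      (fun i _ => hv i)
    exact (Finset.sum_div ..).symm.trans (div_self hT.ne')
  have hrest : (1 - c / T) • y ∈ orthant n := fun i =>
    mul_nonneg (sub_nonneg.mpr ((div_le_one hT).mpr hyc)) (hy i)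
  simpa [← add_smul] using hcompl _ hmem _ hrest

lemma eq_cutOrthant_of_cutOrthant_eq_add (ha : ∀ i, 0 < a i) {K₁ K₂ : Set (Fin n → ℝ)}
    (h₁ : MemC K₁) (h₂ : MemC K₂) (hsum : cutOrthant a 1 = K₁ + K₂) :
    ∃ c, 0 ≤ c ∧ K₁ = cutOrthant a c := by
  have hle : ∀ x ∈ K₁, ∀ y ∈ K₂, 1 ≤ x ⬝ᵥ a + y ⬝ᵥ a := fun x hx y hy => by
    rw [← add_dotProduct]
    exact (hsum ▸ Set.add_mem_add hx hy : x + y ∈ cutOrthant a 1).2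
  have hsplit : ∀ i, ∃ p ∈ K₁, ∃ q ∈ K₂, p + q = vertex a i := fun i => by
    rw [← Set.mem_add, ← hsum]
    exact vertex_mem_cutOrthant ha i
  have : Nonempty (Fin n) := by
    obtain ⟨p, hp⟩ := h₁.2.1
    obtain ⟨q, hq⟩ := h₂.2.1
    by_contra h
    rw [not_nonempty_iff] at h
    linarith [show p ⬝ᵥ a + q ⬝ᵥ a = 0 by simp [dotProduct], hle p hp q hq]
  obtain ⟨p₀, hp₀, q₀, hq₀, hpq₀⟩ := hsplit (Classical.arbitrary _)
  have hsum₀ : p₀ ⬝ᵥ a + q₀ ⬝ᵥ a = 1 := by rw [← add_dotProduct, hpq₀, vertex_dotProduct ha]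
  set c := p₀ ⬝ᵥ a
  have hmin₁ : ∀ x ∈ K₁, c ≤ x ⬝ᵥ a := fun x hx => by linarith [hle x hx q₀ hq₀]
  have hmin₂ : ∀ y ∈ K₂, 1 - c ≤ y ⬝ᵥ a := fun y hy => by linarith [hle p₀ hp₀ y hy]
  have hv : ∀ i, c • vertex a i ∈ K₁ := fun i => by
    obtain ⟨p, hp, q, hq, hpq⟩ := hsplit i
    have hpq' : p ⬝ᵥ a + q ⬝ᵥ a = 1 := by rw [← add_dotProduct, hpq, vertex_dotProduct ha]
    have hpc : p ⬝ᵥ a = c := by linarith [hmin₁ p hp, hmin₂ q hq]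
    rwa [← hpc, ← eq_smul_vertex_of_add_eq_vertex ha (h₁.1 hp) (h₂.1 hq) hpq]
  have hc : 0 ≤ c := dotProduct_nonneg_of_nonneg (h₁.1 hp₀) fun i => (ha i).le
  exact ⟨c, hc, subset_antisymm (fun x hx => ⟨h₁.1 hx, hmin₁ x hx⟩)
    (cutOrthant_subset ha h₁.2.2.2.1 h₁.2.2.2.2 hc hv)⟩

end Orthant

open Orthant in
/-- for a strictly positive weight `a`, the half-space diagram
`Γ_a = {x ∈ ℝ₊ⁿ : ⟨x,a⟩ ≥ 1}` is indecomposable in 𝒞. -/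
theorem Gamma_a_indecomposable {n : ℕ} (a : Fin n → ℝ) (ha : ∀ i, 0 < a i)
    (K₁ K₂ : Set (Fin n → ℝ)) (h₁ : MemC K₁) (h₂ : MemC K₂)
    (hsum : {x | x ∈ orthant n ∧ 1 ≤ ∑ i, x i * a i} = K₁ + K₂) :
    Homothetic K₁ {x | x ∈ orthant n ∧ 1 ≤ ∑ i, x i * a i} ∨
      Homothetic K₂ {x | x ∈ orthant n ∧ 1 ≤ ∑ i, x i * a i} := by
  obtain ⟨c, hc, rfl⟩ := eq_cutOrthant_of_cutOrthant_eq_add ha h₁ h₂ hsum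
  exact Or.inl (homothetic_cutOrthant (fun i => (ha i).le) hc)
end

section
/- In ℝ², the convex complete set Γ generated by the points (3,0), (1,1), (0,2) (the convex hull of the union of the sets p + ℝ₊² for p ∈ {(3,0),(1,1),(0,2)}) decomposes as the Minkowski sum Γ = Γ₁ + Γ₂, where Γ₁ is generated by (1,0) and (0,1), and Γ₂ is generated by (2,0) and (0,1); moreover, neither Γ₁ nor Γ₂ is homothetic to Γ. -/
open Pointwise

/-- the complete convex set generated by a finite set of points of the orthant -/
def gen {n : ℕ} (S : Set (Fin n → ℝ)) : Set (Fin n → ℝ) :=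
  convexHull ℝ (⋃ p ∈ S, {p} + orthant n)

/-!
Minkowski addition commutes with convex hulls, and the upper closure of `S + T` is the sum of the
upper closures of `S` and `T`; hence `gen S + gen T = gen (S + T)`. Here `S + T` consists of the
three given generators and `(2,1)`, which dominates `(1,1)` and so may be dropped.

For non-homothety, compare minima of linear functionals `u ⬝ᵥ ·` with `u ≥ 0`: on `gen S` such a
minimum is attained at a generator, and on `c • B + {x}` (or on `{x} + ℝ₊²`, taking `c = 0`)
it becomes `c * m + u ⬝ᵥ x`. The coordinate functionals have minimum `0` on all sets involved,
which forces `x = 0`; then the minima of `x₀ + x₁` and `x₀ + 2 x₁` would have to scale by the same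
factor, but they are `2, 3` on `Γ`, against `1, 1` on `Γ₁` and `1, 2` on `Γ₂`.
-/

open Matrix

section

variable {n : ℕ}

theorem singleton_add_orthant (p : Fin n → ℝ) : {p} + orthant n = Set.Ici p := by
  change {p} + Set.Ici (0 : Fin n → ℝ) = _
  rw [Set.singleton_add, Set.image_const_add_Ici, add_zero]

theorem gen_eq_convexHull_upperClosure (S : Set (Fin n → ℝ)) :
    gen S = convexHull ℝ (upperClosure S : Set (Fin n → ℝ)) := by
  simp only [gen, singleton_add_orthant, coe_upperClosure]

theorem gen_add_gen (S T : Set (Fin n → ℝ)) : gen S + gen T = gen (S + T) := by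
  simp only [gen_eq_convexHull_upperClosure, ← convexHull_add, ← UpperSet.coe_add,
    upperClosure_add_distrib]

theorem gen_insert_of_le {S : Set (Fin n → ℝ)} {p q : Fin n → ℝ} (hp : p ∈ S) (hpq : p ≤ q) :
    gen (insert q S) = gen S := by
  rw [gen_eq_convexHull_upperClosure, gen_eq_convexHull_upperClosure, Set.insert_eq,
    upperClosure_union, upperClosure_singleton, inf_eq_right.2]
  exact fun x hx => mem_upperClosure.2 ⟨p, hp, hpq.trans hx⟩

theorem isLeast_dotProduct_gen {S : Set (Fin n → ℝ)} {u p : Fin n → ℝ} {m : ℝ} (hu : 0 ≤ u)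
    (hp : p ∈ S) (hpm : u ⬝ᵥ p = m) (hmin : ∀ q ∈ S, m ≤ u ⬝ᵥ q) :
    IsLeast ((u ⬝ᵥ ·) '' gen S) m := by
  rw [gen_eq_convexHull_upperClosure]
  refine ⟨⟨p, subset_convexHull ℝ _ (subset_upperClosure hp), hpm⟩, ?_⟩
  have hlin : IsLinearMap ℝ (u ⬝ᵥ · : (Fin n → ℝ) → ℝ) :=
    ⟨dotProduct_add u, fun c x => dotProduct_smul c u x⟩
  have hupper : IsUpperSet {y | m ≤ u ⬝ᵥ y} := fun y z hyz hy =>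
    hy.trans (dotProduct_le_dotProduct_of_nonneg_left hyz hu)
  rintro _ ⟨y, hy, rfl⟩
  exact convexHull_min (upperClosure_min hmin hupper) (convex_halfSpace_ge hlin m) hy

theorem isLeast_single_dotProduct_gen {S : Set (Fin n → ℝ)} (hS : S ⊆ orthant n) {i : Fin n}
    {p : Fin n → ℝ} (hp : p ∈ S) (hpi : p i = 0) :
    IsLeast ((Pi.single i 1 ⬝ᵥ ·) '' gen S) 0 :=
  isLeast_dotProduct_gen (Pi.single_nonneg.2 zero_le_one) hp (by simp [hpi])
    fun q hq => by simpa using hS hq i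

theorem isLeast_dotProduct_smul_add {B : Set (Fin n → ℝ)} {c m : ℝ} (hc : 0 ≤ c)
    (x : Fin n → ℝ) {u : Fin n → ℝ} (h : IsLeast ((u ⬝ᵥ ·) '' B) m) :
    IsLeast ((u ⬝ᵥ ·) '' (c • B + {x})) (c * m + u ⬝ᵥ x) := by
  obtain ⟨⟨b, hb, rfl⟩, hlow⟩ := h
  refine ⟨⟨c • b + x, Set.add_mem_add (Set.smul_mem_smul_set hb) rfl, ?_⟩, ?_⟩
  · simp only [dotProduct_add, dotProduct_smul, smul_eq_mul]
  · rintro _ ⟨_, ⟨_, ⟨y, hy, rfl⟩, _, rfl, rfl⟩, rfl⟩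
    simp only [dotProduct_add, dotProduct_smul, smul_eq_mul]
    gcongr
    exact hlow ⟨y, hy, rfl⟩

theorem isLeast_dotProduct_singleton_add_orthant (x : Fin n → ℝ) {u : Fin n → ℝ} (hu : 0 ≤ u) :
    IsLeast ((u ⬝ᵥ ·) '' ({x} + orthant n)) (u ⬝ᵥ x) := by
  rw [singleton_add_orthant]
  exact ⟨⟨x, Set.mem_Ici.2 le_rfl, rfl⟩,
    fun _ ⟨y, hy, hyu⟩ => hyu ▸ dotProduct_le_dotProduct_of_nonneg_left hy hu⟩

theorem Homothetic.exists_isLeast_dotProduct {K B : Set (Fin n → ℝ)} (h : Homothetic K B) :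
    ∃ c x, ∀ u : Fin n → ℝ, 0 ≤ u → ∀ m, IsLeast ((u ⬝ᵥ ·) '' B) m →
      IsLeast ((u ⬝ᵥ ·) '' K) (c * m + u ⬝ᵥ x) := by
  rcases h with ⟨c, hc, x, -, rfl⟩ | ⟨x, -, rfl⟩
  · exact ⟨c, x, fun u _ m hm => isLeast_dotProduct_smul_add hc.le x hm⟩
  · refine ⟨0, x, fun u hu m _ => ?_⟩
    simpa using isLeast_dotProduct_singleton_add_orthant x hu

theorem not_homothetic_gen {S T : Set (Fin n → ℝ)} (hS : S ⊆ orthant n) (hT : T ⊆ orthant n)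
    (hS₀ : ∀ i, ∃ p ∈ S, p i = 0) (hT₀ : ∀ i, ∃ p ∈ T, p i = 0)
    {u v : Fin n → ℝ} (hu : 0 ≤ u) (hv : 0 ≤ v) {a a' b b' : ℝ}
    (hSu : IsLeast ((u ⬝ᵥ ·) '' gen S) a) (hSv : IsLeast ((v ⬝ᵥ ·) '' gen S) a')
    (hTu : IsLeast ((u ⬝ᵥ ·) '' gen T) b) (hTv : IsLeast ((v ⬝ᵥ ·) '' gen T) b')
    (hne : a * b' ≠ a' * b) : ¬ Homothetic (gen S) (gen T) := by
  intro h
  obtain ⟨c, x, hcx⟩ := h.exists_isLeast_dotProduct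
  have hx : x = 0 := funext fun i => by
    obtain ⟨p, hp, hpi⟩ := hS₀ i
    obtain ⟨q, hq, hqi⟩ := hT₀ i
    have := (isLeast_single_dotProduct_gen hS hp hpi).unique
      (hcx _ (Pi.single_nonneg.2 zero_le_one) 0 (isLeast_single_dotProduct_gen hT hq hqi))
    simpa using this.symm
  have ha : a = c * b := by simpa [hx] using hSu.unique (hcx u hu b hTu)
  have ha' : a' = c * b' := by simpa [hx] using hSv.unique (hcx v hv b' hTv)
  exact hne (by rw [ha, ha']; ring)

end

theorem gen_pair_add_gen_pair :
    gen {![(1:ℝ),0], ![0,1]} + gen {![(2:ℝ),0], ![0,1]} = gen {![(3:ℝ),0], ![1,1], ![0,2]} := by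
  have hsum : ({![(1:ℝ),0], ![0,1]} + {![(2:ℝ),0], ![0,1]} : Set (Fin 2 → ℝ)) =
      insert ![2,1] {![3,0], ![1,1], ![0,2]} := by
    ext x
    simp only [Set.mem_add, Set.mem_insert_iff, Set.mem_singleton_iff]
    constructor
    · rintro ⟨a, rfl | rfl, b, rfl | rfl, rfl⟩ <;> norm_num
    · rintro (rfl | rfl | rfl | rfl)
      exacts [⟨_, .inr rfl, _, .inl rfl, by norm_num⟩, ⟨_, .inl rfl, _, .inl rfl, by norm_num⟩,
        ⟨_, .inl rfl, _, .inr rfl, by norm_num⟩, ⟨_, .inr rfl, _, .inr rfl, by norm_num⟩]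
  rw [gen_add_gen, hsum, gen_insert_of_le (p := ![1,1]) (by simp)]
  norm_num [Pi.le_def, Fin.forall_fin_two]

/-- the complete convex set generated by `(3,0), (1,1), (0,2)` decomposes as
the Minkowski sum of the sets generated by `(1,0),(0,1)` and by `(2,0),(0,1)`,
neither summand being homothetic to it. -/
theorem example_decomposition :
    gen {![(3:ℝ),0], ![1,1], ![0,2]} = gen {![(1:ℝ),0], ![0,1]} + gen {![(2:ℝ),0], ![0,1]} ∧
    ¬ Homothetic (gen {![(1:ℝ),0], ![0,1]}) (gen {![(3:ℝ),0], ![1,1], ![0,2]}) ∧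
    ¬ Homothetic (gen {![(2:ℝ),0], ![0,1]}) (gen {![(3:ℝ),0], ![1,1], ![0,2]}) := by
  have hu : (0 : Fin 2 → ℝ) ≤ ![1, 1] := by simp [Pi.le_def, Fin.forall_fin_two]
  have hv : (0 : Fin 2 → ℝ) ≤ ![1, 2] := by simp [Pi.le_def, Fin.forall_fin_two]
  refine ⟨gen_pair_add_gen_pair.symm, ?_, ?_⟩
  · refine not_homothetic_gen (a := 1) (a' := 1) (b := 2) (b' := 3) ?_ ?_ ?_ ?_ hu hv
      (isLeast_dotProduct_gen hu (p := ![1, 0]) ?_ ?_ ?_)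
      (isLeast_dotProduct_gen hv (p := ![1, 0]) ?_ ?_ ?_)
      (isLeast_dotProduct_gen hu (p := ![1, 1]) ?_ ?_ ?_)
      (isLeast_dotProduct_gen hv (p := ![1, 1]) ?_ ?_ ?_) (by norm_num)
    all_goals norm_num [orthant, Set.insert_subset_iff, Fin.forall_fin_two, dotProduct]
  · refine not_homothetic_gen (a := 1) (a' := 2) (b := 2) (b' := 3) ?_ ?_ ?_ ?_ hu hv
      (isLeast_dotProduct_gen hu (p := ![0, 1]) ?_ ?_ ?_)
      (isLeast_dotProduct_gen hv (p := ![0, 1]) ?_ ?_ ?_)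
      (isLeast_dotProduct_gen hu (p := ![1, 1]) ?_ ?_ ?_)
      (isLeast_dotProduct_gen hv (p := ![1, 1]) ?_ ?_ ?_) (by norm_num)
    all_goals norm_num [orthant, Set.insert_subset_iff, Fin.forall_fin_two, dotProduct]
end

section
/- Let Γ be a nonempty closed convex complete subset of ℝ₊ⁿ and define ψ(t) = sup{⟨t,a⟩ : a ∈ Γ} for t ∈ ℝ₋ⁿ. Then Γ = {b ∈ ℝ₊ⁿ : ⟨b, t⟩ ≤ ψ(t) for all t ∈ ℝ₋ⁿ}; that is, a complete closed convex subset of the nonnegative orthant is recovered from its support function restricted to the nonpositive orthant. -/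
def negOrthant (n : ℕ) : Set (Fin n → ℝ) := {t | ∀ i, t i ≤ 0}

noncomputable def psi {n : ℕ} (Γ : Set (Fin n → ℝ)) (t : Fin n → ℝ) : ℝ :=
  sSup {r : ℝ | ∃ a ∈ Γ, r = ∑ i, t i * a i}

section SupportFunction

variable {n : ℕ} {Γ : Set (Fin n → ℝ)} {t : Fin n → ℝ}

lemma bddAbove_pairing_of_subset_orthant (hsub : Γ ⊆ orthant n) (ht : t ∈ negOrthant n) :
    BddAbove {r : ℝ | ∃ a ∈ Γ, r = ∑ i, t i * a i} := by
  refine ⟨0, ?_⟩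
  rintro r ⟨a, ha, rfl⟩
  exact Finset.sum_nonpos fun i _ => mul_nonpos_of_nonpos_of_nonneg (ht i) (hsub ha i)

lemma pairing_le_psi (hsub : Γ ⊆ orthant n) (ht : t ∈ negOrthant n) {a : Fin n → ℝ}
    (ha : a ∈ Γ) : ∑ i, t i * a i ≤ psi Γ t :=
  le_csSup (bddAbove_pairing_of_subset_orthant hsub ht) ⟨a, ha, rfl⟩

lemma psi_le_of_forall_pairing_le (hne : Γ.Nonempty) {c : ℝ}
    (hc : ∀ a ∈ Γ, ∑ i, t i * a i ≤ c) : psi Γ t ≤ c := by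
  obtain ⟨a₀, ha₀⟩ := hne
  refine csSup_le ⟨_, a₀, ha₀, rfl⟩ ?_
  rintro r ⟨a, ha, rfl⟩
  exact hc a ha

end SupportFunction

lemma IsComplete'.nonneg_of_forall_le {n : ℕ} {Γ : Set (Fin n → ℝ)} (hco : IsComplete' Γ)
    {a₀ : Fin n → ℝ} (ha₀ : a₀ ∈ Γ) (f : (Fin n → ℝ) →ₗ[ℝ] ℝ) {m : ℝ}
    (hm : ∀ a ∈ Γ, m ≤ f a) {x : Fin n → ℝ} (hx : x ∈ orthant n) : 0 ≤ f x := by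
  by_contra! hfx
  -- Moving from `a₀` by `s • x` stays in `Γ` and lowers `f` by `s * |f x|`, down to `m - 1`.
  set s := (f a₀ - m + 1) / -f x
  have hs : 0 ≤ s := div_nonneg (by linarith [hm a₀ ha₀]) (by linarith)
  have hmem : a₀ + s • x ∈ Γ := hco a₀ ha₀ _ fun i => mul_nonneg hs (hx i)
  have hfs : f (a₀ + s • x) = m - 1 := by
    rw [map_add, map_smul, smul_eq_mul, div_mul_eq_mul_div, div_neg,
      mul_div_cancel_right₀ _ hfx.ne]
    ring
  linarith [hm _ hmem]

lemma exists_psi_lt_pairing_of_notMem {n : ℕ} {Γ : Set (Fin n → ℝ)}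
    (hne : Γ.Nonempty) (hcl : IsClosed Γ) (hcv : Convex ℝ Γ) (hco : IsComplete' Γ)
    {b : Fin n → ℝ} (hb : b ∉ Γ) :
    ∃ t ∈ negOrthant n, psi Γ t < ∑ i, b i * t i := by
  obtain ⟨f, u, hfb, hfΓ⟩ := geometric_hahn_banach_point_closed hcv hcl hb
  obtain ⟨a₀, ha₀⟩ := hne
  let e : Fin n → Fin n → ℝ := fun i j => if i = j then 1 else 0
  have he : ∀ i, e i ∈ orthant n := fun i j => by simp only [e]; split_ifs <;> norm_num
  have hpairing : ∀ a, ∑ i, a i * -f (e i) = -f a := fun a => by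
    rw [← ContinuousLinearMap.coe_coe f, LinearMap.pi_apply_eq_sum_univ]
    simp only [mul_neg, Finset.sum_neg_distrib, smul_eq_mul, e]
  refine ⟨fun i => -f (e i), fun i => neg_nonpos.mpr <|
    hco.nonneg_of_forall_le ha₀ (f : _ →ₗ[ℝ] ℝ) (fun a ha => (hfΓ a ha).le) (he i), ?_⟩
  have hpsi : psi Γ (fun i => -f (e i)) ≤ -u :=
    psi_le_of_forall_pairing_le ⟨a₀, ha₀⟩ fun a ha => by
      simp_rw [mul_comm (-f (e _)), hpairing]
      linarith [hfΓ a ha]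
  rw [hpairing]
  linarith

/-- a nonempty closed convex complete subset of the nonnegative orthant
is recovered from its support function on the nonpositive orthant. -/
theorem diagram_recovery {n : ℕ} (Γ : Set (Fin n → ℝ))
    (hsub : Γ ⊆ orthant n) (hne : Γ.Nonempty) (hcl : IsClosed Γ)
    (hcv : Convex ℝ Γ) (hco : IsComplete' Γ) :
    Γ = {b | b ∈ orthant n ∧ ∀ t ∈ negOrthant n, ∑ i, b i * t i ≤ psi Γ t} := by
  ext b
  refine ⟨fun hb => ⟨hsub hb, fun t ht => ?_⟩, fun ⟨_, hb⟩ => ?_⟩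
  · simpa only [mul_comm] using pairing_le_psi hsub ht hb
  · by_contra hbΓ
    obtain ⟨t, ht, hlt⟩ := exists_psi_lt_pairing_of_notMem hne hcl hcv hco hbΓ
    exact (hb t ht).not_gt hlt
end
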